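/- Let k be an infinite field of characteristic different from 2 and let f, g be quadratic forms on k^{m}. Then the quadratic form f + t·g on k(t)^{m} over the rational function field k(t) is nondegenerate if and only if there exist λ, μ ∈ k, not both zero, such that the quadratic form λf + μg on k^m is nondegenerate. -/

import Mathlib

/-- The base change of a quadratic form on `K^m` along a field homomorphism `σ : K →+* L`,
obtained by applying `σ` entrywise to the Gram matrix of the form. -/
noncomputable def QuadraticForm.mapBase {K L : Type*} [Field K] [Field L] [Invertible (2 : K)]
    {m : ℕ} (σ : K →+* L) (q : QuadraticForm K (Fin m → K)) :
    QuadraticForm L (Fin m → L) :=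
  ((QuadraticMap.toMatrix' q).map σ).toQuadraticMap'

/-!
Over a field the polar form of `M.toQuadraticForm'` is nondegenerate iff `det (M + Mᵀ) ≠ 0`,
so both sides concern the determinant of a matrix pencil `A + t • B`. That determinant is a
polynomial `P ∈ k[t]` with `P(a) = det (A + a • B)` and `tᵐ`-coefficient `det B`. If `P ≠ 0`,
it has a non-root `a` because `k` is infinite, and `(1, a)` is a nondegenerate member. If
`P = 0`, every member is degenerate: `det (λ • A + μ • B) = λᵐ P(μ / λ)` for `λ ≠ 0`, and
`det (μ • B) = μᵐ det B = 0` for `λ = 0`.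
-/

open Matrix Polynomial

namespace Matrix

variable {R : Type*} [CommRing R] {n : Type*} [Fintype n] [DecidableEq n]

theorem flip_toLinearMap₂' (M : Matrix n n R) :
    (toLinearMap₂' R M : (n → R) →ₗ[R] (n → R) →ₗ[R] R).flip =
      toLinearMap₂' R Mᵀ := by
  refine LinearMap.ext₂ fun x y => ?_
  rw [LinearMap.flip_apply, toLinearMap₂'_apply', toLinearMap₂'_apply', dotProduct_mulVec,
    ← mulVec_transpose, dotProduct_comm]

theorem polarBilin_toQuadraticForm' (M : Matrix n n R) :
    M.toQuadraticForm'.polarBilin = toLinearMap₂' R (M + Mᵀ) := by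
  rw [toQuadraticForm', LinearMap.BilinMap.polarBilin_toQuadraticMap, flip_toLinearMap₂',
    map_add]

theorem nondegenerate_polarBilin_toQuadraticForm'_iff {K : Type*} [Field K] (M : Matrix n n K) :
    M.toQuadraticForm'.polarBilin.Nondegenerate ↔ (M + Mᵀ).det ≠ 0 := by
  rw [polarBilin_toQuadraticForm', LinearMap.nondegenerate_toLinearMap₂'_iff_det_ne_zero]

theorem toQuadraticForm'_add (M N : Matrix n n R) :
    (M + N).toQuadraticForm' = M.toQuadraticForm' + N.toQuadraticForm' := by
  simp only [toQuadraticForm', map_add, LinearMap.BilinMap.toQuadraticMap_add]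

theorem toQuadraticForm'_smul (a : R) (M : Matrix n n R) :
    (a • M).toQuadraticForm' = a • M.toQuadraticForm' := by
  simp only [toQuadraticForm', map_smul, LinearMap.BilinMap.toQuadraticMap_smul]

end Matrix

theorem QuadraticForm.toQuadraticForm'_toMatrix' {R : Type*} [CommRing R] [Invertible (2 : R)]
    {n : Type*} [Fintype n] [DecidableEq n] (Q : QuadraticForm R (n → R)) :
    Q.toMatrix'.toQuadraticForm' = Q := by
  rw [toMatrix', toQuadraticForm', toLinearMap₂'_toMatrix']
  exact Q.toQuadraticMap_associated R

theorem Polynomial.eval_det_X_smul_map_C_add_map_C {R : Type*} [CommRing R] {n : Type*}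
    [Fintype n] [DecidableEq n] (A B : Matrix n n R) (a : R) :
    ((X : R[X]) • A.map C + B.map C).det.eval a = (a • A + B).det := by
  rw [← coe_evalRingHom, RingHom.map_det, RingHom.mapMatrix_apply]
  congr 1
  ext i j
  simp only [coe_evalRingHom, map_apply, Matrix.add_apply, Matrix.smul_apply, smul_eq_mul,
    eval_add, eval_mul, eval_C, eval_X]

section Pencil

variable {k : Type*} [Field k] {n : Type*} [Fintype n] [DecidableEq n]

theorem det_map_add_ratFuncX_smul_map (A B : Matrix n n k) :
    (A.map (algebraMap k (RatFunc k)) +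
        (RatFunc.X : RatFunc k) • B.map (algebraMap k (RatFunc k))).det =
      algebraMap k[X] (RatFunc k) ((X : k[X]) • B.map C + A.map C).det := by
  rw [RingHom.map_det, RingHom.mapMatrix_apply, add_comm]
  congr 1
  ext i j
  simp only [RatFunc.algebraMap_eq_C, Matrix.add_apply, Matrix.smul_apply, map_apply,
    smul_eq_mul, map_add, map_mul, RatFunc.algebraMap_C, RatFunc.algebraMap_X]

theorem det_smul_add_smul_eq_zero_of_forall {A B : Matrix n n k}
    (hA : ∀ a : k, (a • B + A).det = 0) (hB : B.det = 0) (lam mu : k) :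
    (lam • A + mu • B).det = 0 := by
  rcases eq_or_ne lam 0 with rfl | hlam
  · rw [zero_smul, zero_add, det_smul, hB, mul_zero]
  · have : lam • A + mu • B = lam • ((lam⁻¹ * mu) • B + A) := by
      rw [smul_add, smul_smul, ← mul_assoc, mul_inv_cancel₀ hlam, one_mul, add_comm]
    rw [this, det_smul, hA, mul_zero]

theorem det_pencil_ne_zero_iff [Infinite k] (A B : Matrix n n k) :
    (A.map (algebraMap k (RatFunc k)) +
        (RatFunc.X : RatFunc k) • B.map (algebraMap k (RatFunc k))).det ≠ 0 ↔
      ∃ lam mu : k, ¬(lam = 0 ∧ mu = 0) ∧ (lam • A + mu • B).det ≠ 0 := by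
  rw [det_map_add_ratFuncX_smul_map, ne_eq,
    map_eq_zero_iff _ (RatFunc.algebraMap_injective k)]
  constructor
  · intro hP
    obtain ⟨a, ha⟩ := not_forall.mp (mt (zero_of_eval_zero _) hP)
    refine ⟨1, a, by simp, ?_⟩
    rwa [one_smul, add_comm, ← eval_det_X_smul_map_C_add_map_C]
  · rintro ⟨lam, mu, -, hdet⟩ hP
    refine hdet (det_smul_add_smul_eq_zero_of_forall (fun a => ?_) ?_ lam mu)
    · rw [← eval_det_X_smul_map_C_add_map_C, hP, eval_zero]
    · rw [← coeff_det_X_add_C_card, hP, coeff_zero]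

end Pencil

/-- Let `k` be an infinite field of characteristic different from `2` (equivalently, with
`2` invertible) and `f`, `g` quadratic forms on `k^m`. The pencil `f + t•g` over the
rational function field `k(t)` is nondegenerate iff some member `λ•f + μ•g` of the pencil
with `(λ, μ) ≠ (0, 0)` is nondegenerate over `k`. -/
theorem pencil_nondegenerate_iff_exists_nondegenerate_member
    (k : Type*) [Field k] [Infinite k] [Invertible (2 : k)] (m : ℕ)
    (f g : QuadraticForm k (Fin m → k)) :
    LinearMap.BilinForm.Nondegenerate
      (f.mapBase (algebraMap k (RatFunc k)) +
        (RatFunc.X : RatFunc k) • g.mapBase (algebraMap k (RatFunc k))).polarBilin ↔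
      ∃ lam mu : k, ¬(lam = 0 ∧ mu = 0) ∧
        LinearMap.BilinForm.Nondegenerate (lam • f + mu • g).polarBilin := by
  set σ := algebraMap k (RatFunc k)
  set A := f.toMatrix'
  set B := g.toMatrix'
  have hpencil : f.mapBase σ + (RatFunc.X : RatFunc k) • g.mapBase σ =
      (A.map σ + (RatFunc.X : RatFunc k) • B.map σ).toQuadraticForm' := by
    rw [toQuadraticForm'_add, toQuadraticForm'_smul]
    rfl
  have hmember (lam mu : k) : lam • f + mu • g = (lam • A + mu • B).toQuadraticForm' := by
    rw [toQuadraticForm'_add, toQuadraticForm'_smul, toQuadraticForm'_smul,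
      QuadraticForm.toQuadraticForm'_toMatrix', QuadraticForm.toQuadraticForm'_toMatrix']
  have hsymm_pencil : A.map σ + (RatFunc.X : RatFunc k) • B.map σ +
      (A.map σ + (RatFunc.X : RatFunc k) • B.map σ)ᵀ =
        (A + Aᵀ).map σ + (RatFunc.X : RatFunc k) • (B + Bᵀ).map σ := by
    simp only [transpose_add, transpose_smul, ← transpose_map, Matrix.map_add _ (map_add σ),
      smul_add]
    abel
  have hsymm_member (lam mu : k) : lam • A + mu • B + (lam • A + mu • B)ᵀ =
      lam • (A + Aᵀ) + mu • (B + Bᵀ) := by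
    simp only [transpose_add, transpose_smul, smul_add]
    abel
  simp only [hpencil, hmember, nondegenerate_polarBilin_toQuadraticForm'_iff, hsymm_pencil,
    hsymm_member]
  exact det_pencil_ne_zero_iff _ _
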